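/- Setting t = 0 and σ = k a positive integer in the Euler-product modulus formula yields ζ(k) = (2π)^k · sqrt(|B_{4k}|·(2k)! / (|B_{2k}|·(4k)!)) · ∏_{p prime} (1 - 2/(p^k + p^{-k}))^{-1/2}, for every integer k ≥ 2. -/
import Mathlib

open Real Filter

section helpers

variable {ι : Type*}

lemma my_sqrt_finset_prod (s : Finset ι) (f : ι → ℝ) (hf : ∀ i, 0 ≤ f i) :
    Real.sqrt (∏ i ∈ s, f i) = ∏ i ∈ s, Real.sqrt (f i) := by
  induction s using Finset.cons_induction with
  | empty => simp
  | cons a s ha ih => rw [Finset.prod_cons, Finset.prod_cons, Real.sqrt_mul (hf a), ih]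

lemma my_hasProd_sqrt {f : ι → ℝ} {a : ℝ} (hf : ∀ i, 0 ≤ f i) (h : HasProd f a) :
    HasProd (fun i => Real.sqrt (f i)) (Real.sqrt a) := by
  have := (Real.continuous_sqrt.tendsto a).comp h
  simpa [Function.comp_def, my_sqrt_finset_prod _ f hf, HasProd] using this

lemma my_hasProd_inv {f : ι → ℝ} {a : ℝ} (ha : a ≠ 0) (h : HasProd f a) :
    HasProd (fun i => (f i)⁻¹) a⁻¹ := by
  have := ((continuousAt_inv₀ ha).tendsto).comp h
  simpa [Function.comp_def, HasProd] using this

end helpers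

noncomputable def realZeta (s : ℝ) : ℝ := ∑' n : ℕ, ((n : ℝ) + 1) ^ (-s)

lemma realZeta_summable (s : ℕ) (hs : 2 ≤ s) :
    Summable (fun n : ℕ => ((n : ℝ)) ^ (-(s : ℝ))) := by
  rw [Real.summable_nat_rpow]
  have : (1 : ℝ) < s := by exact_mod_cast Nat.lt_of_lt_of_le one_lt_two hs
  linarith

lemma realZeta_eq_tsum (s : ℕ) (hs : 2 ≤ s) :
    realZeta s = ∑' n : ℕ, ((n : ℝ)) ^ (-(s : ℝ)) := by
  have hsum := realZeta_summable s hs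
  rw [Summable.tsum_eq_zero_add hsum]
  have h0 : ((0 : ℕ) : ℝ) ^ (-(s : ℝ)) = 0 := by
    rw [Nat.cast_zero, Real.zero_rpow]
    have : (1 : ℝ) < s := by exact_mod_cast Nat.lt_of_lt_of_le one_lt_two hs
    intro h; rw [neg_eq_zero] at h; linarith
  rw [h0, zero_add, realZeta]
  congr 1
  ext n
  push_cast
  ring_nf

lemma realZeta_hasProd (s : ℕ) (hs : 2 ≤ s) :
    HasProd (fun p : Nat.Primes => (1 - ((p : ℕ) : ℝ) ^ (-(s : ℝ)))⁻¹) (realZeta s) := by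
  have hsne : -(s : ℝ) ≠ 0 := by
    have : (1 : ℝ) < s := by exact_mod_cast Nat.lt_of_lt_of_le one_lt_two hs
    intro h; rw [neg_eq_zero] at h; linarith
  let f : ℕ →*₀ ℝ :=
    { toFun := fun n => (n : ℝ) ^ (-(s : ℝ))
      map_zero' := by
        show ((0 : ℕ) : ℝ) ^ (-(s : ℝ)) = 0
        rw [Nat.cast_zero, Real.zero_rpow hsne]
      map_one' := by
        show ((1 : ℕ) : ℝ) ^ (-(s : ℝ)) = 1
        rw [Nat.cast_one, Real.one_rpow]
      map_mul' := fun m n => by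
        show ((m * n : ℕ) : ℝ) ^ (-(s : ℝ)) = _ * _
        push_cast
        exact Real.mul_rpow (Nat.cast_nonneg m) (Nat.cast_nonneg n) }
  have hsum : Summable (fun n => ‖f n‖) := by
    have := realZeta_summable s hs
    refine this.congr fun n => ?_
    simp only [f, MonoidWithZeroHom.coe_mk, ZeroHom.coe_mk, Real.norm_eq_abs,
      abs_of_nonneg (Real.rpow_nonneg (Nat.cast_nonneg n) _)]
  have h := EulerProduct.eulerProduct_completely_multiplicative_hasProd (f := f) hsum
  simp only [f, MonoidWithZeroHom.coe_mk, ZeroHom.coe_mk] at h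
  rwa [← realZeta_eq_tsum s hs] at h

lemma realZeta_pos (s : ℕ) (hs : 2 ≤ s) : 0 < realZeta s := by
  rw [realZeta]
  have hsum : Summable (fun n : ℕ => ((n : ℝ) + 1) ^ (-(s : ℝ))) := by
    have := (summable_nat_add_iff 1).mpr (realZeta_summable s hs)
    refine this.congr fun n => ?_
    push_cast
    ring_nf
  exact Summable.tsum_pos hsum (fun n => Real.rpow_nonneg (by positivity) _) 0
    (Real.rpow_pos_of_pos (by norm_num) _)

lemma realZeta_even (s m : ℕ) (hsm : s = 2 * m) (hm : m ≠ 0) :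
    realZeta s = |(bernoulli s : ℝ)| * (2 * π) ^ s / (2 * (Nat.factorial s)) := by
  subst hsm
  have hs2 : 2 ≤ 2 * m := by omega
  have h := hasSum_zeta_nat hm
  set S : ℝ := (-1 : ℝ) ^ (m + 1) * (2 : ℝ) ^ (2 * m - 1) * π ^ (2 * m) *
      (bernoulli (2 * m) : ℝ) / (Nat.factorial (2 * m)) with hS
  have hg0 : (1 : ℝ) / (0 : ℝ) ^ (2 * m) = 0 := by
    rw [zero_pow (by omega), div_zero]
  have h'' : HasSum (fun n : ℕ => 1 / (((n + 1 : ℕ)) : ℝ) ^ (2 * m)) S :=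
    (hasSum_nat_add_iff (f := fun n : ℕ => 1 / (n : ℝ) ^ (2 * m)) 1).mpr
      (by simpa [zero_pow (by omega : 2 * m ≠ 0)] using h)
  have h' : HasSum (fun n : ℕ => 1 / ((n : ℝ) + 1) ^ (2 * m)) S := by
    refine h''.congr_fun fun n => ?_
    push_cast
    ring_nf
  have hz : realZeta (((2 * m : ℕ) : ℝ)) = S := by
    rw [realZeta]
    have : (fun n : ℕ => ((n : ℝ) + 1) ^ (-((2 * m : ℕ) : ℝ))) =
        fun n : ℕ => 1 / ((n : ℝ) + 1) ^ (2 * m) := by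
      ext n
      rw [Real.rpow_neg (by positivity), Real.rpow_natCast, one_div]
    rw [this, h'.tsum_eq]
  have hpos : 0 < S := hz ▸ realZeta_pos (2 * m) hs2
  have hfacm : (0 : ℝ) < (Nat.factorial (2 * m) : ℝ) := Nat.cast_pos.mpr (Nat.factorial_pos _)
  have hc : (0 : ℝ) < (2 : ℝ) ^ (2 * m - 1) * π ^ (2 * m) / (Nat.factorial (2 * m)) :=
    div_pos (by positivity) hfacm
  have hS' : S = ((-1 : ℝ) ^ (m + 1) * (bernoulli (2 * m) : ℝ)) *
      ((2 : ℝ) ^ (2 * m - 1) * π ^ (2 * m) / (Nat.factorial (2 * m))) := by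
    rw [hS]; ring
  have hsign : 0 < (-1 : ℝ) ^ (m + 1) * (bernoulli (2 * m) : ℝ) := by
    by_contra hcon
    push_neg at hcon
    have := mul_nonpos_of_nonpos_of_nonneg hcon hc.le
    rw [← hS'] at this
    linarith
  have habs : |(bernoulli (2 * m) : ℝ)| = (-1 : ℝ) ^ (m + 1) * (bernoulli (2 * m) : ℝ) := by
    rw [← abs_of_pos hsign, abs_mul, abs_pow, abs_neg, abs_one, one_pow, one_mul]
  have hpow : (2 : ℝ) ^ (2 * m - 1) = 2 ^ (2 * m) / 2 := by
    rw [eq_div_iff (two_ne_zero' ℝ), ← pow_succ]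
    congr 1
    omega
  rw [hz, hS, habs, hpow, mul_pow]
  ring

lemma factor_eq (q : ℝ) (hq : 1 < q) (k : ℕ) (hk : k ≠ 0) :
    (1 - 2 / (q ^ (k : ℝ) + q ^ (-(k : ℝ)))) ^ (-(1 : ℝ) / 2)
      = (1 - q ^ (-(k : ℝ)))⁻¹ *
        (Real.sqrt ((1 - q ^ (-((2 * k : ℕ) : ℝ)))⁻¹) *
          Real.sqrt (1 - q ^ (-((4 * k : ℕ) : ℝ)))) := by
  have hq0 : (0 : ℝ) < q := by linarith
  set x : ℝ := q ^ (-(k : ℝ)) with hxdef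
  have hkpos : (0 : ℝ) < k := by exact_mod_cast Nat.pos_of_ne_zero hk
  have hx0 : 0 < x := Real.rpow_pos_of_pos hq0 _
  have hx1 : x < 1 := Real.rpow_lt_one_of_one_lt_of_neg hq (by linarith)
  have hx2 : q ^ (-((2 * k : ℕ) : ℝ)) = x ^ 2 := by
    rw [hxdef, ← Real.rpow_natCast (q ^ (-(k : ℝ))) 2, ← Real.rpow_mul (le_of_lt hq0)]
    push_cast
    ring_nf
  have hx4 : q ^ (-((4 * k : ℕ) : ℝ)) = x ^ 4 := by
    rw [hxdef, ← Real.rpow_natCast (q ^ (-(k : ℝ))) 4, ← Real.rpow_mul (le_of_lt hq0)]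
    push_cast
    ring_nf
  have hqk : q ^ (k : ℝ) = x⁻¹ := by
    rw [hxdef, ← Real.rpow_neg (le_of_lt hq0), neg_neg]
  rw [hx2, hx4, hqk]
  have h1x : 0 < 1 - x := by linarith
  have h1x2 : 0 < 1 - x ^ 2 := by nlinarith
  have h1x4 : 0 < 1 - x ^ 4 := by nlinarith
  have h1px2 : 0 < 1 + x ^ 2 := by positivity
  have hF : 1 - 2 / (x⁻¹ + x) = (1 - x) ^ 2 * (1 - x ^ 2) / (1 - x ^ 4) := by
    field_simp
    ring
  rw [hF]
  have hFpos : 0 < (1 - x) ^ 2 * (1 - x ^ 2) / (1 - x ^ 4) := by positivity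
  have hhalf : (-(1 : ℝ) / 2) = -(1 / 2 : ℝ) := by norm_num
  rw [hhalf, Real.rpow_neg (le_of_lt hFpos), ← Real.sqrt_eq_rpow, ← Real.sqrt_inv]
  have hFinv : ((1 - x) ^ 2 * (1 - x ^ 2) / (1 - x ^ 4))⁻¹
      = ((1 - x)⁻¹) ^ 2 * ((1 - x ^ 2)⁻¹ * (1 - x ^ 4)) := by
    field_simp
  rw [hFinv, Real.sqrt_mul (by positivity), Real.sqrt_sq (by positivity),
    Real.sqrt_mul (by positivity)]

theorem stmt9 (k : ℕ) (hk : 2 ≤ k) :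
    realZeta k =
      (2 * Real.pi) ^ k *
        Real.sqrt (|(bernoulli (4 * k) : ℝ)| * (Nat.factorial (2 * k)) /
          (|(bernoulli (2 * k) : ℝ)| * (Nat.factorial (4 * k)))) *
        ∏' p : Nat.Primes,
          (1 - 2 / (((p : ℕ) : ℝ) ^ (k : ℝ) + ((p : ℕ) : ℝ) ^ (-(k : ℝ)))) ^ (-(1 : ℝ) / 2) := by
  have hk0 : k ≠ 0 := by omega
  have h2k : 2 ≤ 2 * k := by omega
  have h4k : 2 ≤ 4 * k := by omega
  have hZ2pos := realZeta_pos (2 * k) h2k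
  have hZ4pos := realZeta_pos (4 * k) h4k
  have h1 := realZeta_hasProd k hk
  have h2 := realZeta_hasProd (2 * k) h2k
  have h4 := realZeta_hasProd (4 * k) h4k
  have hple : ∀ p : Nat.Primes, (1 : ℝ) < ((p : ℕ) : ℝ) := fun p => by
    exact_mod_cast p.prop.one_lt
  have hxlt : ∀ (p : Nat.Primes) (s : ℕ), 2 ≤ s → ((p : ℕ) : ℝ) ^ (-(s : ℝ)) < 1 := by
    intro p s hs
    refine Real.rpow_lt_one_of_one_lt_of_neg (hple p) ?_
    have : (1 : ℝ) < s := by exact_mod_cast Nat.lt_of_lt_of_le one_lt_two hs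
    linarith
  have hB := my_hasProd_sqrt (fun p => by
      have := hxlt p (2 * k) h2k
      have h1 : (0 : ℝ) < 1 - ((p : ℕ) : ℝ) ^ (-((2 * k : ℕ) : ℝ)) := by linarith
      exact (inv_pos.mpr h1).le) h2
  have h4' := my_hasProd_inv (ne_of_gt hZ4pos) h4
  simp only [inv_inv] at h4'
  have hC := my_hasProd_sqrt (fun p => by
      have := hxlt p (4 * k) h4k
      linarith) h4'
  have htot := h1.mul (hB.mul hC)
  have hfun : (fun p : Nat.Primes =>
        (1 - 2 / (((p : ℕ) : ℝ) ^ (k : ℝ) + ((p : ℕ) : ℝ) ^ (-(k : ℝ)))) ^ (-(1 : ℝ) / 2))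
      = fun p : Nat.Primes =>
        (1 - ((p : ℕ) : ℝ) ^ (-(k : ℝ)))⁻¹ *
          (Real.sqrt ((1 - ((p : ℕ) : ℝ) ^ (-((2 * k : ℕ) : ℝ)))⁻¹) *
            Real.sqrt (1 - ((p : ℕ) : ℝ) ^ (-((4 * k : ℕ) : ℝ)))) := by
    ext p
    exact factor_eq _ (hple p) k hk0
  rw [hfun, htot.tprod_eq]
  -- final numeric identity
  have hzv2 := realZeta_even (2 * k) k rfl hk0
  have hzv4 := realZeta_even (4 * k) (2 * k) (by ring) (by omega)
  have hB2pos : 0 < |(bernoulli (2 * k) : ℝ)| := by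
    rcases eq_or_lt_of_le (abs_nonneg (bernoulli (2 * k) : ℝ)) with h | h
    · exfalso
      rw [hzv2, ← h] at hZ2pos
      simp at hZ2pos
    · exact h
  have hB4pos : 0 < |(bernoulli (4 * k) : ℝ)| := by
    rcases eq_or_lt_of_le (abs_nonneg (bernoulli (4 * k) : ℝ)) with h | h
    · exfalso
      rw [hzv4, ← h] at hZ4pos
      simp at hZ4pos
    · exact h
  have hfac2 : (0 : ℝ) < (Nat.factorial (2 * k) : ℝ) := Nat.cast_pos.mpr (Nat.factorial_pos _)
  have hfac4 : (0 : ℝ) < (Nat.factorial (4 * k) : ℝ) := Nat.cast_pos.mpr (Nat.factorial_pos _)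
  set Q : ℝ := |(bernoulli (4 * k) : ℝ)| * (Nat.factorial (2 * k)) /
      (|(bernoulli (2 * k) : ℝ)| * (Nat.factorial (4 * k))) with hQ
  have hQpos : 0 < Q :=
    div_pos (mul_pos hB4pos hfac2) (mul_pos hB2pos hfac4)
  have hpi : (0 : ℝ) < 2 * π := by positivity
  have key : Q * (realZeta ((2 * k : ℕ) : ℝ) * (realZeta ((4 * k : ℕ) : ℝ))⁻¹)
      = (((2 * π) ^ k)⁻¹) ^ 2 := by
    rw [hzv2, hzv4, hQ]
    have e2 : (2 * π) ^ (2 * k) = ((2 * π) ^ k) ^ 2 := by rw [← pow_mul]; ring_nf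
    have e4 : (2 * π) ^ (4 * k) = ((2 * π) ^ k) ^ 4 := by rw [← pow_mul]; ring_nf
    rw [e2, e4]
    have hpk : (0 : ℝ) < (2 * π) ^ k := by positivity
    field_simp
  have hsqrt : Real.sqrt Q *
      (Real.sqrt (realZeta ((2 * k : ℕ) : ℝ)) * Real.sqrt ((realZeta ((4 * k : ℕ) : ℝ))⁻¹))
      = ((2 * π) ^ k)⁻¹ := by
    rw [← Real.sqrt_mul (le_of_lt hZ2pos), ← Real.sqrt_mul (le_of_lt hQpos), key,
      Real.sqrt_sq (by positivity)]
  calc realZeta (k : ℝ)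
      = realZeta (k : ℝ) * ((2 * π) ^ k * ((2 * π) ^ k)⁻¹) := by
        rw [mul_inv_cancel₀ (by positivity), mul_one]
    _ = (2 * π) ^ k * Real.sqrt Q *
        (realZeta (k : ℝ) * (Real.sqrt (realZeta ((2 * k : ℕ) : ℝ)) *
          Real.sqrt ((realZeta ((4 * k : ℕ) : ℝ))⁻¹))) := by
        rw [← hsqrt]; ring
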